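/- Let p, q ∈ {0,1,∞} and x, y ∈ H. Then ⟨v_p^x, v_q^y⟩ = 0 if and only if: x ∉ {y, -y} when p = q; y ∈ -H⁺x when (p,q) ∈ {(0,1), (1,∞), (∞,0)}; and x ∈ H⁺y when (p,q) ∈ {(1,0), (∞,1), (0,∞)}. -/
import Mathlib


open Matrix

abbrev V6 := Fin 6 → ℤ

def C6 : Matrix (Fin 6) (Fin 6) ℤ :=
  !![1,0,-1,-1,1,1;
     0,1,-1,-1,1,1;
     0,0,1,0,-1,-1;
     0,0,0,1,-1,-1;
     0,0,0,0,1,0;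
     0,0,0,0,0,1]

/-- The bilinear form `⟨x,y⟩ = xᵀ C y` on `ℤ^6`. -/
def form (x y : V6) : ℤ := x ⬝ᵥ C6.mulVec y

/-- The quaternion `i`. -/
def qI : Quaternion ℤ := ⟨0,1,0,0⟩
/-- The quaternion `j`. -/
def qJ : Quaternion ℤ := ⟨0,0,1,0⟩
/-- The quaternion `k`. -/
def qK : Quaternion ℤ := ⟨0,0,0,1⟩

instance : DecidableEq (Quaternion ℤ) := fun x y =>
  decidable_of_iff (x.re = y.re ∧ x.imI = y.imI ∧ x.imJ = y.imJ ∧ x.imK = y.imK)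
    ⟨fun ⟨h1, h2, h3, h4⟩ => QuaternionAlgebra.ext h1 h2 h3 h4,
     fun h => by subst h; exact ⟨rfl, rfl, rfl, rfl⟩⟩

/-- The quaternion group `H = {±1, ±i, ±j, ±k}`. -/
def Hset : Finset (Quaternion ℤ) := {1, -1, qI, -qI, qJ, -qJ, qK, -qK}

/-- The subset `H⁺ = {1, i, j, k}`. -/
def Hplus : Finset (Quaternion ℤ) := {1, qI, qJ, qK}

/-- Index type for the three special slopes `0`, `1`, `∞`. -/
inductive Ty | zero | one | inf
deriving DecidableEq

def h0 : V6 := ![0,0,1,1,1,1]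
def h1 : V6 := ![1,1,2,2,1,1]
def hinf : V6 := ![1,1,1,1,0,0]

def hTy : Ty → V6
  | .zero => h0
  | .one => h1
  | .inf => hinf

/-- The vectors `v_t^x` for `t ∈ {0,1,∞}` and `x ∈ H⁺`. -/
def vposTy : Ty → Quaternion ℤ → V6
  | .zero, x => if x = 1 then ![0,0,1,0,1,0] else if x = qI then ![-1,0,0,0,0,0]
      else if x = qJ then ![0,0,1,0,0,1] else ![0,1,1,1,1,1]
  | .one, x => if x = 1 then ![1,0,1,1,1,0] else if x = qI then ![0,1,1,1,1,0]
      else if x = qJ then ![0,0,1,0,0,0] else ![1,1,2,1,1,1]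
  | .inf, x => if x = 1 then ![1,0,0,1,0,0] else if x = qI then ![1,1,1,1,1,0]
      else if x = qJ then ![0,0,0,0,0,-1] else ![1,0,1,0,0,0]

/-- The vectors `v_t^x` for `t ∈ {0,1,∞}` and `x ∈ H`, with `v_t^{-x} = h_t - v_t^x`. -/
def vTy (t : Ty) (x : Quaternion ℤ) : V6 :=
  if x ∈ Hplus then vposTy t x else hTy t - vposTy t (-x)

/-- `a(q)`: numerator, with `a(∞) = 1`. -/
def aQ : WithTop ℚ → ℤ := WithTop.recTopCoe 1 Rat.num

/-- `b(q)`: denominator, with `b(∞) = 0`. -/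
def bQ : WithTop ℚ → ℤ := WithTop.recTopCoe 0 (fun x => (x.den : ℤ))

/-- The type `t(q) ∈ {0,1,∞}` of a slope `q`. -/
def tyQ (q : WithTop ℚ) : Ty :=
  if aQ q % 2 = 0 then Ty.zero else if bQ q % 2 = 1 then Ty.one else Ty.inf

/-- `⌊n⌋₂ = n/2` for even `n` and `(n-1)/2` for odd `n`. -/
def half2 (n : ℤ) : ℤ := if Even n then n / 2 else (n - 1) / 2

/-- `h_q = b(q)·h₀ + a(q)·h_∞`. -/
def hQ (q : WithTop ℚ) : V6 := bQ q • h0 + aQ q • hinf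

/-- `v_q^x = v_{t(q)}^x + ⌊b(q)⌋₂·h₀ + ⌊a(q)⌋₂·h_∞`. -/
def vQ (q : WithTop ℚ) (x : Quaternion ℤ) : V6 :=
  vTy (tyQ q) x + half2 (bQ q) • h0 + half2 (aQ q) • hinf

/-- `rk e = ⟨e, h_∞⟩`. -/
def rk (e : V6) : ℤ := form e hinf

/-- `deg e = ⟨h₀, e⟩`. -/
def degV (e : V6) : ℤ := form h0 e

/-- `e` is positive if `rk e > 0`, or `rk e = 0` and `deg e > 0`. -/
def PosV (e : V6) : Prop := 0 < rk e ∨ (rk e = 0 ∧ 0 < degV e)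

/-- `d(p,q) = |a(q)b(p) - a(p)b(q)|`. -/
def dQ (p q : WithTop ℚ) : ℤ := |aQ q * bQ p - aQ p * bQ q|

/-- Complexity `c(p) = |a(p)| + |b(p)| + |a(p)+b(p)|`. -/
def cpx (p : WithTop ℚ) : ℤ := |aQ p| + |bQ p| + |aQ p + bQ p|


theorem stmt7 (p q : Ty) (x y : Quaternion ℤ) (hx : x ∈ Hset) (hy : y ∈ Hset) :
    form (vTy p x) (vTy q y) = 0 ↔
      (match p, q with
      | .zero, .zero => ¬(x = y ∨ x = -y)
      | .one, .one => ¬(x = y ∨ x = -y)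
      | .inf, .inf => ¬(x = y ∨ x = -y)
      | .zero, .one => ∃ h ∈ Hplus, y = -(h * x)
      | .one, .inf => ∃ h ∈ Hplus, y = -(h * x)
      | .inf, .zero => ∃ h ∈ Hplus, y = -(h * x)
      | .one, .zero => ∃ h ∈ Hplus, x = h * y
      | .inf, .one => ∃ h ∈ Hplus, x = h * y
      | .zero, .inf => ∃ h ∈ Hplus, x = h * y) := by
  simp only [Hset, Finset.mem_insert, Finset.mem_singleton] at hx hy
  rcases hx with rfl|rfl|rfl|rfl|rfl|rfl|rfl|rfl <;>
  rcases hy with rfl|rfl|rfl|rfl|rfl|rfl|rfl|rfl <;>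
  cases p <;> cases q <;> decide
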